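/- arXiv:2205.07210 — 3 statements merged into one kernel-verified Lean document; each statement's English description precedes it below -/
import Mathlib

section
/- For every real t ≥ 1, the function f(x) = x·(1 + t − log x)^{19/8} is concave on the interval (0, 1]. -/
/-!
With `u = c - log x`, the function `f x = x * u ^ p` has `f' = u ^ p - p * u ^ (p - 1)` and
`f'' = -p * u ^ (p - 2) * (u - (p - 1)) / x`. On `(0, 1]` we have `u ≥ c`, so `f'' ≤ 0` as soon
as `c ≥ p - 1`; for the theorem, `c = 1 + t ≥ 2 ≥ 19/8 - 1`.
-/

open Real Set

section

variable {c p x : ℝ}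

lemma hasDerivAt_sub_log_rpow (hx : 0 < x) (hu : c - log x ≠ 0) :
    HasDerivAt (fun y => (c - log y) ^ p) (-(p * (c - log x) ^ (p - 1) / x)) x := by
  convert ((hasDerivAt_log hx.ne').const_sub c).rpow_const (p := p) (Or.inl hu) using 1
  ring

lemma hasDerivAt_mul_sub_log_rpow (hx : 0 < x) (hu : c - log x ≠ 0) :
    HasDerivAt (fun y => y * (c - log y) ^ p)
      ((c - log x) ^ p - p * (c - log x) ^ (p - 1)) x := by
  refine ((hasDerivAt_id' x).mul (hasDerivAt_sub_log_rpow (p := p) hx hu)).congr_deriv ?_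
  field_simp
  ring

lemma hasDerivAt_sub_log_rpow_sub_mul_rpow_sub_one (hx : 0 < x) (hu : c - log x ≠ 0) :
    HasDerivAt (fun y => (c - log y) ^ p - p * (c - log y) ^ (p - 1))
      (-(p * (c - log x) ^ (p - 2) * (c - log x - (p - 1)) / x)) x := by
  refine ((hasDerivAt_sub_log_rpow (p := p) hx hu).sub
    ((hasDerivAt_sub_log_rpow (p := p - 1) hx hu).const_mul p)).congr_deriv ?_
  have hpow : (c - log x) ^ (p - 1) = (c - log x) ^ (p - 2) * (c - log x) := by
    rw [← rpow_add_one hu]; ring_nf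
  rw [sub_sub, one_add_one_eq_two, hpow]
  ring

theorem concaveOn_mul_sub_log_rpow (hp : 0 ≤ p) (hc : 0 < c) (hpc : p - 1 ≤ c) :
    ConcaveOn ℝ (Ioc 0 1) (fun x => x * (c - log x) ^ p) := by
  have hu : ∀ x ∈ Ioc (0 : ℝ) 1, c ≤ c - log x := fun x hx => by
    linarith [log_nonpos hx.1.le hx.2]
  have hu₀ : ∀ x ∈ Ioc (0 : ℝ) 1, c - log x ≠ 0 := fun x hx => (hc.trans_le (hu x hx)).ne'
  have hcont : ContinuousOn (fun x => c - log x) (Ioc 0 1) :=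
    continuousOn_const.sub (continuousOn_log.mono fun x hx => hx.1.ne')
  refine concaveOn_of_hasDerivWithinAt2_nonpos (convex_Ioc 0 1)
    (f' := fun x => (c - log x) ^ p - p * (c - log x) ^ (p - 1))
    (f'' := fun x => -(p * (c - log x) ^ (p - 2) * (c - log x - (p - 1)) / x))
    (continuousOn_id.mul (hcont.rpow_const fun x hx => Or.inl (hu₀ x hx)))
    (fun x hx => ?_) (fun x hx => ?_) (fun x hx => ?_) <;>
    obtain ⟨hx₀, hx₁⟩ := interior_subset hx
  · exact (hasDerivAt_mul_sub_log_rpow hx₀ (hu₀ x ⟨hx₀, hx₁⟩)).hasDerivWithinAt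
  · exact (hasDerivAt_sub_log_rpow_sub_mul_rpow_sub_one hx₀
      (hu₀ x ⟨hx₀, hx₁⟩)).hasDerivWithinAt
  · have hux := hu x ⟨hx₀, hx₁⟩
    refine neg_nonpos.2 (div_nonneg (mul_nonneg (mul_nonneg hp ?_) ?_) hx₀.le)
    · exact rpow_nonneg (by linarith) _
    · linarith

end

theorem concave_x_mul_log_pow (t : ℝ) (ht : 1 ≤ t) :
    ConcaveOn ℝ (Set.Ioc (0 : ℝ) 1)
      (fun x : ℝ => x * (1 + t - Real.log x) ^ ((19 : ℝ) / 8)) :=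
  concaveOn_mul_sub_log_rpow (by norm_num) (by linarith) (by linarith)
end

section
/- Let n ≥ 1 be an integer and θ : ℕ → ℝ be a nonincreasing function with θ(k) ≥ 0 for all k, θ(m) = 0 for all m > n, and such that for every integer k with 1 ≤ k ≤ n one has θ(⌈k + √k/2⌉) ≥ θ(k) − 2/√k. Then θ(1) ≤ 10·(1 + log n). -/
/-! The step `k ↦ ⌈k + √k / 2⌉` raises `log k` by at least `1 / (3√k)` while, by hypothesis, it
lowers `θ` by at most `2 / √k`. Hence `θ k + 6 log k` can only grow along the iteration, which
leaves `[1, n]` after finitely many steps; at the last step inside, `θ k ≤ 2 / √k ≤ 2`. This gives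
`θ k ≤ 6 (log n - log k) + 2` for all `1 ≤ k ≤ n`, and `k = 1` is the claim. -/

open Real

lemma two_div_sqrt_le_six_mul_log_sub {x y : ℝ} (hx : 1 ≤ x) (hy : x + √x / 2 ≤ y) :
    2 / √x ≤ 6 * (log y - log x) := by
  have hs : 1 ≤ √x := by simpa using Real.sqrt_le_sqrt hx
  have hsq : √x ^ 2 = x := Real.sq_sqrt (by linarith)
  have hy0 : 0 < y := by linarith
  have hratio : x / y ≤ x / (x + √x / 2) :=
    div_le_div_of_nonneg_left (by linarith) (by positivity) hy
  have hlog : 1 - x / y ≤ log y - log x := by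
    rw [← Real.log_div hy0.ne' (by positivity)]
    simpa using Real.one_sub_inv_le_log_of_pos (div_pos hy0 (by linarith : (0 : ℝ) < x))
  have hgain : 1 / (3 * √x) ≤ 1 - x / (x + √x / 2) := by
    have hid : 1 - x / (x + √x / 2) = 1 / (2 * √x + 1) := by
      field_simp
      linear_combination 2 * hsq
    rw [hid]
    exact one_div_le_one_div_of_le (by positivity) (by linarith)
  calc 2 / √x = 6 * (1 / (3 * √x)) := by field_simp; norm_num
    _ ≤ 6 * (log y - log x) := by linarith

lemma le_six_mul_log_sub_add_two_of_step {n : ℕ} {θ : ℕ → ℝ}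
    (hzero : ∀ m, n < m → θ m = 0)
    (hstep : ∀ k : ℕ, 1 ≤ k → k ≤ n →
      θ k - 2 / √k ≤ θ ⌈(k : ℝ) + √k / 2⌉₊)
    (k : ℕ) (hk : 1 ≤ k) (hkn : k ≤ n) :
    θ k ≤ 6 * (log n - log k) + 2 := by
  set k' := ⌈(k : ℝ) + √k / 2⌉₊
  have hk1 : (1 : ℝ) ≤ k := by exact_mod_cast hk
  have hceil : (k : ℝ) + √k / 2 ≤ k' := Nat.le_ceil _
  have hgain : 2 / √k ≤ 6 * (log k' - log k) := two_div_sqrt_le_six_mul_log_sub hk1 hceil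
  have hlt : k < k' := by
    have : 0 < √(k : ℝ) := Real.sqrt_pos.mpr (by linarith)
    exact_mod_cast (by linarith : (k : ℝ) < k')
  have hθ := hstep k hk hkn
  by_cases hk'n : k' ≤ n
  · have hrec := le_six_mul_log_sub_add_two_of_step hzero hstep k' (by omega) hk'n
    linarith
  · have hsqrt : 2 / √(k : ℝ) ≤ 2 :=
      div_le_self zero_le_two (by simpa using Real.sqrt_le_sqrt hk1)
    have hlog : log k ≤ log n := Real.log_le_log (by linarith) (by exact_mod_cast hkn)
    rw [hzero k' (by omega)] at hθ
    linarith
termination_by n - k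

theorem green_level_iteration_general (n : ℕ) (hn : 1 ≤ n) (θ : ℕ → ℝ)
    (hzero : ∀ m, n < m → θ m = 0)
    (hstep : ∀ k : ℕ, 1 ≤ k → k ≤ n →
      θ k - 2 / Real.sqrt k ≤ θ ⌈(k : ℝ) + Real.sqrt k / 2⌉₊) :
    θ 1 ≤ 10 * (1 + Real.log n) := by
  have h := le_six_mul_log_sub_add_two_of_step hzero hstep 1 le_rfl hn
  have hlog : 0 ≤ Real.log n := Real.log_natCast_nonneg n
  simp only [Nat.cast_one, Real.log_one, sub_zero] at h
  linarith

theorem green_level_iteration (n : ℕ) (hn : 1 ≤ n) (θ : ℕ → ℝ)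
    (hmono : Antitone θ) (hnonneg : ∀ k, 0 ≤ θ k)
    (hzero : ∀ m, n < m → θ m = 0)
    (hstep : ∀ k : ℕ, 1 ≤ k → k ≤ n →
      θ k - 2 / Real.sqrt k ≤ θ ⌈(k : ℝ) + Real.sqrt k / 2⌉₊) :
    θ 1 ≤ 10 * (1 + Real.log n) :=
  green_level_iteration_general n hn θ hzero hstep
end

section
/- Let V be a finite set, let a : V × V → ℝ be symmetric with a(x,y) ≥ 0 for all x, y, let I ⊊ V, and let U : V → ℝ satisfy ∑_{y ∈ V} a(x,y)(U(x) − U(y)) ≤ 0 for every x ∈ I. Assume that for every x ∈ I there is a path x = x₀, x₁, …, x_k with a(x_{j}, x_{j+1}) > 0 for all j and x_k ∈ V ∖ I. Then max_{x ∈ V} U(x) = max_{x ∈ V ∖ I} U(x). -/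
/-!
At a maximum point `x` of `U` every term `a x y * (U x - U y)` of the subharmonicity sum is
nonnegative, so if `x` is interior they all vanish and every neighbour `y` with `a x y > 0` is again
a maximum point. Following a path from a maximum point towards the boundary, maximality is passed
on as long as the path stays inside `I`, hence the maximum is attained at the first boundary vertex.
-/

open Finset

lemma apply_eq_of_isMaxOn_of_sum_mul_sub_nonpos {V : Type*} [Fintype V] {a : V → V → ℝ}
    {U : V → ℝ} {x y : V} (hnonneg : ∀ z, 0 ≤ a x z) (hmax : IsMaxOn U Set.univ x)
    (hsub : ∑ z, a x z * (U x - U z) ≤ 0) (hxy : 0 < a x y) : U y = U x := by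
  have hterm : ∀ z ∈ univ, 0 ≤ a x z * (U x - U z) := fun z _ =>
    mul_nonneg (hnonneg z) (sub_nonneg.mpr (isMaxOn_univ_iff.mp hmax z))
  have hzero : a x y * (U x - U y) = 0 :=
    (sum_eq_zero_iff_of_nonneg hterm).mp (le_antisymm hsub (sum_nonneg hterm)) y (mem_univ y)
  linarith [(mul_eq_zero.mp hzero).resolve_left hxy.ne']

lemma exists_notMem_of_path {V : Type*} {s : Set V} {R : V → V → Prop} {P : V → Prop}
    (hprop : ∀ x ∈ s, P x → ∀ y, R x y → P y) :
    ∀ (k : ℕ) (p : ℕ → V), P (p 0) → (∀ j < k, R (p j) (p (j + 1))) → p k ∉ s →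
      ∃ z ∉ s, P z
  | 0, p, h0, _, hk => ⟨p 0, hk, h0⟩
  | k + 1, p, h0, hpath, hk => by
    by_cases hs : p 0 ∈ s
    · exact exists_notMem_of_path hprop k (fun j => p (j + 1))
        (hprop _ hs h0 _ (hpath 0 k.succ_pos)) (fun j hj => hpath (j + 1) (by omega)) hk
    · exact ⟨p 0, hs, h0⟩

theorem discrete_maximum_principle_general {V : Type*} [Fintype V] [DecidableEq V]
    (a : V → V → ℝ) (hnonneg : ∀ x y, 0 ≤ a x y)
    (I : Finset V) (hI : I ≠ Finset.univ) (U : V → ℝ)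
    (hsub : ∀ x ∈ I, ∑ y, a x y * (U x - U y) ≤ 0)
    (hconn : ∀ x ∈ I, ∃ (k : ℕ) (p : ℕ → V), p 0 = x ∧
      (∀ j < k, 0 < a (p j) (p (j + 1))) ∧ p k ∉ I) :
    Finset.univ.sup'
        (Finset.Nonempty.mono (Finset.subset_univ Iᶜ)
          (Finset.nonempty_iff_ne_empty.mpr (fun h => hI ((Finset.compl_eq_empty_iff I).mp h)))) U =
      Iᶜ.sup'
        (Finset.nonempty_iff_ne_empty.mpr (fun h => hI ((Finset.compl_eq_empty_iff I).mp h))) U := by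
  set M := univ.sup' _ U
  have hle : ∀ y, U y ≤ M := fun y => le_sup' U (mem_univ y)
  have hprop : ∀ x ∈ (I : Set V), U x = M → ∀ y, 0 < a x y → U y = M := fun x hx hUx y hxy => by
    rw [← hUx] at hle ⊢
    exact apply_eq_of_isMaxOn_of_sum_mul_sub_nonpos (hnonneg x) (isMaxOn_univ_iff.mpr hle)
      (hsub x hx) hxy
  obtain ⟨x, -, hx⟩ : ∃ x ∈ univ, M = U x := exists_mem_eq_sup' _ U
  obtain ⟨z, hzI, hz⟩ : ∃ z ∉ (I : Set V), U z = M := by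
    by_cases hxI : x ∈ I
    · obtain ⟨k, p, rfl, hpath, hk⟩ := hconn x hxI
      exact exists_notMem_of_path hprop k p hx.symm hpath hk
    · exact ⟨x, hxI, hx.symm⟩
  refine le_antisymm ?_ (sup'_le _ _ fun y _ => hle y)
  exact hz ▸ le_sup' U (mem_compl.mpr hzI)

theorem discrete_maximum_principle {V : Type*} [Fintype V] [DecidableEq V]
    (a : V → V → ℝ) (hsymm : ∀ x y, a x y = a y x) (hnonneg : ∀ x y, 0 ≤ a x y)
    (I : Finset V) (hI : I ≠ Finset.univ) (U : V → ℝ)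
    (hsub : ∀ x ∈ I, ∑ y, a x y * (U x - U y) ≤ 0)
    (hconn : ∀ x ∈ I, ∃ (k : ℕ) (p : ℕ → V), p 0 = x ∧
      (∀ j < k, 0 < a (p j) (p (j + 1))) ∧ p k ∉ I) :
    Finset.univ.sup'
        (Finset.Nonempty.mono (Finset.subset_univ Iᶜ)
          (Finset.nonempty_iff_ne_empty.mpr (fun h => hI ((Finset.compl_eq_empty_iff I).mp h)))) U =
      Iᶜ.sup'
        (Finset.nonempty_iff_ne_empty.mpr (fun h => hI ((Finset.compl_eq_empty_iff I).mp h))) U :=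
  discrete_maximum_principle_general a hnonneg I hI U hsub hconn
end
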